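/- If α > 7/4, then f_α(x) = 1 - αx² has exactly 6 points of least period 3. -/
import Mathlib
set_option maxHeartbeats 1000000


/-- f_α(x) = 1 - αx² -/
noncomputable def f (α x : ℝ) : ℝ := 1 - α * x ^ 2

/-- auxiliary cubic whose roots form one of the two period-3 orbits -/
noncomputable def g (α τ x : ℝ) : ℝ :=
  2*α^3*x^3 + (τ-1)*α^2*x^2 - (2*α+1+τ)*α*x + 2 - α*(1+τ)

lemma key_identity (α t x : ℝ) (ht : t^2 = 4*α - 7) :
    4*(f α (f α (f α x)) - x) = (f α x - x) * g α t x * g α (-t) x := by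
  simp only [f, g]
  linear_combination (α^2 + x*α^2 - x^2*α^2 - 3*x^2*α^3 - x^3*α^2 - 2*x^3*α^3
    + x^4*α^3 + 3*x^4*α^4 + x^5*α^4 - x^6*α^5) * ht

/-- a root of the cubic g is not a fixed point of f -/
lemma root_not_fixed (α τ x : ℝ) (hτ : τ^2 = 4*α - 7)
    (hg : g α τ x = 0) (hfx : f α x = x) : False := by
  simp only [f] at hfx
  have hz2 : (-α*x)^2 - (-α*x) - α = 0 := by linear_combination (-α) * hfx
  have hR : (1-τ)*(-α*x) - (1-2*α) = 0 := by
    simp only [g] at hg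
    linear_combination (-1/2) * hg - ((-α*x) + (3-τ)/2) * hz2
  have hfin : τ^2 + τ + 7 = 0 := by
    linear_combination ((1-τ) - 2*(1-τ)*(-α*x) + ((1-τ)*(-α*x) - (1-2*α))) * hR
      + (1-τ)^2 * hz2 + (1+α) * hτ
  nlinarith [sq_nonneg (2*τ + 1)]

/-- the two cubics have no common root -/
lemma roots_disjoint (α t x : ℝ) (ht : t^2 = 4*α - 7) (ht0 : 0 < t) (hα : 0 < α)
    (hp : g α t x = 0) (hm : g α (-t) x = 0) : False := by
  have h3 : 2*t*α*(α*x^2 - x - 1) = 0 := by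
    simp only [g] at hp hm
    linear_combination hp - hm
  have hq : α*x^2 - x - 1 = 0 := by
    rcases mul_eq_zero.mp h3 with h | h
    · rcases mul_eq_zero.mp h with h | h
      · nlinarith
      · exact absurd h hα.ne'
    · exact h
  have h2 : (2:ℝ) = 0 := by
    simp only [g] at hp
    linear_combination hp + 2*(-α*x - (t+1)/2)*α * hq
  norm_num at h2

/-- a real cubic with three known distinct roots has exactly three roots -/
lemma cubic_encard {a b c d : ℝ} (ha : a ≠ 0) {r1 r2 r3 : ℝ}
    (h12 : r1 < r2) (h23 : r2 < r3)
    (e1 : a*r1^3 + b*r1^2 + c*r1 + d = 0)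
    (e2 : a*r2^3 + b*r2^2 + c*r2 + d = 0)
    (e3 : a*r3^3 + b*r3^2 + c*r3 + d = 0) :
    {x : ℝ | a*x^3 + b*x^2 + c*x + d = 0}.encard = 3 := by
  set p : Polynomial ℝ := Polynomial.C a * Polynomial.X ^ 3 + Polynomial.C b * Polynomial.X ^ 2
    + Polynomial.C c * Polynomial.X + Polynomial.C d with hp
  have heval : ∀ x : ℝ, p.eval x = a*x^3 + b*x^2 + c*x + d := by
    intro x; simp [hp]
  have hdeg : p.natDegree = 3 := Polynomial.natDegree_cubic ha
  have hp0 : p ≠ 0 := fun h => by simp [h] at hdeg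
  have hSeq : {x : ℝ | a*x^3 + b*x^2 + c*x + d = 0} = {x : ℝ | p.IsRoot x} := by
    ext x; simp [Polynomial.IsRoot, heval]
  rw [hSeq]
  apply le_antisymm
  · have hsub : {x : ℝ | p.IsRoot x} ⊆ ↑p.roots.toFinset := by
      intro x hx
      simp only [Finset.coe_sort_coe, Multiset.mem_toFinset, Finset.mem_coe]
      exact (Polynomial.mem_roots hp0).mpr hx
    calc {x : ℝ | p.IsRoot x}.encard ≤ (↑p.roots.toFinset : Set ℝ).encard :=
          Set.encard_mono hsub
      _ = (p.roots.toFinset.card : ℕ∞) := Set.encard_coe_eq_coe_finsetCard _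
      _ ≤ 3 := by
          have h1 : p.roots.toFinset.card ≤ Multiset.card p.roots :=
            Multiset.toFinset_card_le _
          have h2 : Multiset.card p.roots ≤ 3 := hdeg ▸ Polynomial.card_roots' p
          exact_mod_cast h1.trans h2
  · have hsub : ({r1, r2, r3} : Set ℝ) ⊆ {x : ℝ | p.IsRoot x} := by
      intro x hx
      simp only [Set.mem_insert_iff, Set.mem_singleton_iff] at hx
      rcases hx with rfl | rfl | rfl <;>
        simp only [Set.mem_setOf_eq, Polynomial.IsRoot, heval] <;> assumption
    have hcard : ({r1, r2, r3} : Set ℝ).encard = 3 := by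
      rw [Set.encard_insert_of_notMem (by simp [h12.ne, (h12.trans h23).ne]),
        Set.encard_pair h23.ne]
      rfl
    calc (3:ℕ∞) = ({r1, r2, r3} : Set ℝ).encard := hcard.symm
      _ ≤ _ := Set.encard_mono hsub

/-- each of the two cubics has exactly three real roots -/
lemma g_encard (α τ : ℝ) (hα : 7/4 < α) (hτ : τ^2 = 4*α - 7)
    {p1 p2 : ℝ} (hop1 : -2 < p1) (hp12 : p1 < p2) (hp2o : p2 < 2)
    (hvm2 : g α τ (-2) < 0) (hv1 : g α τ p1 = 2) (hv2 : g α τ p2 = -2)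
    (hv2' : 0 < g α τ 2) :
    {x : ℝ | g α τ x = 0}.encard = 3 := by
  have hα0 : (0:ℝ) < α := by linarith
  have hcont : Continuous (fun x => g α τ x) := by
    unfold g; continuity
  obtain ⟨r1, hr1m, hr1⟩ : ∃ r ∈ Set.Ioo (-2:ℝ) p1, g α τ r = 0 := by
    have h := intermediate_value_Ioo (le_of_lt hop1) hcont.continuousOn
    have h0 : (0:ℝ) ∈ Set.Ioo (g α τ (-2)) (g α τ p1) := by
      constructor
      · exact hvm2
      · rw [hv1]; norm_num
    obtain ⟨r, hrm, hr⟩ := h h0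
    exact ⟨r, hrm, hr⟩
  obtain ⟨r2, hr2m, hr2⟩ : ∃ r ∈ Set.Ioo p1 p2, g α τ r = 0 := by
    have h := intermediate_value_Ioo' (le_of_lt hp12) hcont.continuousOn
    have h0 : (0:ℝ) ∈ Set.Ioo (g α τ p2) (g α τ p1) := by
      rw [hv1, hv2]; norm_num
    obtain ⟨r, hrm, hr⟩ := h h0
    exact ⟨r, hrm, hr⟩
  obtain ⟨r3, hr3m, hr3⟩ : ∃ r ∈ Set.Ioo p2 (2:ℝ), g α τ r = 0 := by
    have h := intermediate_value_Ioo (le_of_lt hp2o) hcont.continuousOn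
    have h0 : (0:ℝ) ∈ Set.Ioo (g α τ p2) (g α τ 2) := by
      constructor
      · rw [hv2]; norm_num
      · exact hv2'
    obtain ⟨r, hrm, hr⟩ := h h0
    exact ⟨r, hrm, hr⟩
  have hSeq : {x : ℝ | g α τ x = 0}
      = {x : ℝ | (2*α^3)*x^3 + ((τ-1)*α^2)*x^2 + (-(2*α+1+τ)*α)*x + (2 - α*(1+τ)) = 0} := by
    ext x
    simp only [Set.mem_setOf_eq, g]
    constructor <;> intro h <;> linear_combination h
  rw [hSeq]
  have ha : (2*α^3) ≠ 0 := by positivity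
  have h12 : r1 < r2 := lt_trans hr1m.2 hr2m.1
  have h23 : r2 < r3 := lt_trans hr2m.2 hr3m.1
  refine cubic_encard ha h12 h23 ?_ ?_ ?_
  · simp only [g] at hr1; linear_combination hr1
  · simp only [g] at hr2; linear_combination hr2
  · simp only [g] at hr3; linear_combination hr3

theorem six_period_three_points_above_seven_fourths (α : ℝ) (hα : 7 / 4 < α) :
    {x : ℝ | f α (f α (f α x)) = x ∧ f α x ≠ x}.encard = 6 := by
  have hα0 : (0:ℝ) < α := by linarith
  have hs : (0:ℝ) < α - 7/4 := by linarith
  obtain ⟨t, ht, ht0⟩ : ∃ t : ℝ, t^2 = 4*α - 7 ∧ 0 < t :=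
    ⟨Real.sqrt (4*α - 7), Real.sq_sqrt (by linarith), Real.sqrt_pos.mpr (by linarith)⟩
  have htm : (-t)^2 = 4*α - 7 := by linear_combination ht
  -- the target set is the union of the root sets of the two cubics
  have hset : {x : ℝ | f α (f α (f α x)) = x ∧ f α x ≠ x}
      = {x : ℝ | g α t x = 0} ∪ {x : ℝ | g α (-t) x = 0} := by
    ext x
    simp only [Set.mem_setOf_eq, Set.mem_union]
    constructor
    · rintro ⟨h3, h1⟩
      have hk := key_identity α t x ht
      rw [h3] at hk
      have hz : (f α x - x) * g α t x * g α (-t) x = 0 := by linarith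
      have hne : f α x - x ≠ 0 := sub_ne_zero.mpr h1
      rcases mul_eq_zero.mp hz with h | h
      · rcases mul_eq_zero.mp h with h | h
        · exact absurd h hne
        · exact Or.inl h
      · exact Or.inr h
    · intro h
      have hgprod : (f α x - x) * g α t x * g α (-t) x = 0 := by
        rcases h with h | h
        · rw [h]; ring
        · rw [h]; ring
      have h3 : f α (f α (f α x)) = x := by
        have hk := key_identity α t x ht
        rw [hgprod] at hk
        linarith
      refine ⟨h3, fun hfx => ?_⟩
      rcases h with h | h
      · exact root_not_fixed α t x ht h hfx
      · exact root_not_fixed α (-t) x htm h hfx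
  rw [hset]
  have hdisj : Disjoint {x : ℝ | g α t x = 0} {x : ℝ | g α (-t) x = 0} := by
    rw [Set.disjoint_left]
    intro x hx hx'
    exact roots_disjoint α t x ht ht0 hα0 hx hx'
  rw [Set.encard_union_eq hdisj]
  -- outer sign values
  have hbase1 : (0:ℝ) < 16*α^3 - α - 2 := by nlinarith [pow_pos hs 2, pow_pos hs 3]
  have hbase2 : (0:ℝ) < 16*α^3 - 8*α^2 - 3*α + 2 := by nlinarith [pow_pos hs 2, pow_pos hs 3]
  have houtA : g α t (-2) < 0 := by
    have hlt : t*(4*α^2+α) < 16*α^3 - α - 2 := by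
      have h2 : (t*(4*α^2+α))^2 < (16*α^3-α-2)^2 := by
        have he : (t*(4*α^2+α))^2 = (4*α-7)*(4*α^2+α)^2 := by rw [mul_pow, ht]
        rw [he]
        nlinarith [pow_pos hs 2, pow_pos hs 3, pow_pos hs 4, pow_pos hs 5, pow_pos hs 6]
      exact lt_of_pow_lt_pow_left₀ 2 (le_of_lt hbase1) h2
    simp only [g]; nlinarith [hlt]
  have houtB : 0 < g α t 2 := by
    simp only [g]
    nlinarith [mul_pos ht0 (show (0:ℝ) < 4*α^2 - 3*α by nlinarith), hbase2]
  have houtC : g α (-t) (-2) < 0 := by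
    simp only [g]
    nlinarith [mul_pos ht0 (show (0:ℝ) < 4*α^2 + α by nlinarith), hbase1]
  have houtD : 0 < g α (-t) 2 := by
    have hlt : t*(4*α^2-3*α) < 16*α^3 - 8*α^2 - 3*α + 2 := by
      have h2 : (t*(4*α^2-3*α))^2 < (16*α^3-8*α^2-3*α+2)^2 := by
        have he : (t*(4*α^2-3*α))^2 = (4*α-7)*(4*α^2-3*α)^2 := by rw [mul_pow, ht]
        rw [he]
        nlinarith [pow_pos hs 2, pow_pos hs 3, pow_pos hs 4, pow_pos hs 5, pow_pos hs 6]
      exact lt_of_pow_lt_pow_left₀ 2 (le_of_lt hbase2) h2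
    simp only [g]; nlinarith [hlt]
  -- inner evaluation points for g α t
  have h2α : (2*α) ≠ 0 := by positivity
  have hxA : 2*α*(-(t+1)/(2*α)) = -(t+1) := by field_simp
  have hxB : 2*α*((1-t)/(2*α)) = 1-t := by field_simp
  have hxC : 2*α*((t-1)/(2*α)) = t-1 := by field_simp
  have hxD : 2*α*((t+1)/(2*α)) = t+1 := by field_simp
  have hv1 : g α t (-(t+1)/(2*α)) = 2 := by
    simp only [g]
    linear_combination (α^2*(-(t+1)/(2*α))^2 - α*(-(t+1)/(2*α)) - α) * hxA
  have hv2 : g α t ((1-t)/(2*α)) = -2 := by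
    simp only [g]
    linear_combination (α^2*((1-t)/(2*α))^2 - α - 1/2 - t/2) * hxB + (1/2) * ht
  have hv3 : g α (-t) ((t-1)/(2*α)) = 2 := by
    simp only [g]
    linear_combination (α^2*((t-1)/(2*α))^2 - α*((t-1)/(2*α)) - α) * hxC
  have hv4 : g α (-t) ((t+1)/(2*α)) = -2 := by
    simp only [g]
    linear_combination (α^2*((t+1)/(2*α))^2 - α - 1/2 + t/2) * hxD + (1/2) * ht
  -- orderings of the evaluation points
  have hordA : -2 < -(t+1)/(2*α) := by
    rw [lt_div_iff₀ (by positivity : (0:ℝ) < 2*α)]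
    nlinarith [ht, sq_nonneg (t-1)]
  have hordB : -(t+1)/(2*α) < (1-t)/(2*α) := by
    rw [div_lt_div_iff₀ (by positivity) (by positivity : (0:ℝ) < 2*α)]
    nlinarith
  have hordC : (1-t)/(2*α) < 2 := by
    rw [div_lt_iff₀ (by positivity : (0:ℝ) < 2*α)]
    nlinarith
  have hordD : -2 < (t-1)/(2*α) := by
    rw [lt_div_iff₀ (by positivity : (0:ℝ) < 2*α)]
    nlinarith
  have hordE : (t-1)/(2*α) < (t+1)/(2*α) := by
    rw [div_lt_div_iff₀ (by positivity) (by positivity : (0:ℝ) < 2*α)]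
    nlinarith
  have hordF : (t+1)/(2*α) < 2 := by
    rw [div_lt_iff₀ (by positivity : (0:ℝ) < 2*α)]
    nlinarith [ht, sq_nonneg (t-1)]
  have hc1 : {x : ℝ | g α t x = 0}.encard = 3 :=
    g_encard α t hα ht hordA hordB hordC houtA hv1 hv2 houtB
  have hc2 : {x : ℝ | g α (-t) x = 0}.encard = 3 :=
    g_encard α (-t) hα htm hordD hordE hordF houtC hv3 hv4 houtD
  rw [hc1, hc2]
  rfl
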